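/- arXiv:1606.00974 — 2 statements merged into one kernel-verified Lean document; each statement's English description precedes it below -/
import Mathlib

section
/- Let f : Fin m → Sym2 V be a multigraph on a finite vertex set V with |V| = n that is decodable (q even sense), and suppose u_b = b(n+1) + n − 2m + 1. Let α be the number of vertices v with incidence degree d_I(v) = b, β the number of vertices with d_I(v) ≥ b + 2, and L the number of loop indices. Then β = 0 and either (1) α = b(n+1) + n − 2m and L = b, or (2) α = b(n+1) + n − 2m + 1 and L = b + 1. -/
/-- The underlying simple graph of the sub-multigraph of `f : ι → Sym2 V` on the
edge-index set `S`. -/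
def mGraph {V ι : Type*} (f : ι → Sym2 V) (S : Set ι) : SimpleGraph V :=
  SimpleGraph.fromRel (fun a b => ∃ i ∈ S, f i = s(a, b))

/-- Decodability (over `GF(q)` with `q` even): every connected component of the underlying
simple graph contains a vertex carrying a loop. -/
def DecodEven {V ι : Type*} (f : ι → Sym2 V) (S : Set ι) : Prop :=
  ∀ v : V, ∃ w : V, (mGraph f S).Reachable v w ∧ ∃ i ∈ S, f i = s(w, w)

/-- `uCount f x` is the number of `x`-element subsets `D` of the edge-index set whose
deletion leaves an undecodable (`q` even sense) sub-multigraph. -/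
noncomputable def uCount {V ι : Type*} [Fintype ι] (f : ι → Sym2 V) (x : ℕ) : ℕ :=
  Nat.card {D : Finset ι // D.card = x ∧ ¬ DecodEven f ((↑D : Set ι)ᶜ)}

/-- `bCut f` is the least `x` with `uCount f x > 0`. -/
noncomputable def bCut {V ι : Type*} [Fintype ι] (f : ι → Sym2 V) : ℕ :=
  sInf {x : ℕ | 0 < uCount f x}

/-- The incidence degree of a vertex `v`: the number of edge indices `i` with `v ∈ f i`
(a loop at `v` contributes one). -/
noncomputable def incDeg {V ι : Type*} (f : ι → Sym2 V) (v : V) : ℕ :=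
  Nat.card {i : ι // v ∈ f i}

/-!
The incidence set `N(v)` of every vertex and, when `V` is nonempty, the set of loops are
undecodable cuts, so `b ≤ d_I(v)` for all `v` and `b ≤ L`. Decodability makes the sets `N(v)`
pairwise distinct and, once `n ≥ 2`, distinct from the loop set; hence `u_b ≥ α`, and
`u_b ≥ α + 1` when `L = b`. The handshake identity `∑ d_I(v) + L = 2m` together with `d_I ≥ b`
gives `(b + 1) n + β + L ≤ 2m + α`, and comparing with the assumed value of `u_b` leaves exactly
the two stated cases. For `n = 0` all `u_x` vanish, and for `n = 1` the bound `u_b ≤ C(m, b)`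
forces `b = m` and `u_b ≤ 1`; both contradict the assumed value of `u_b`.
-/

open Finset

section Multigraph

variable {V ι : Type*}

lemma mGraph_reachable_mem {f : ι → Sym2 V} {S : Set ι} {T : Set V}
    (hT : ∀ i ∈ S, ∀ a b, f i = s(a, b) → a ∈ T → b ∈ T) {v w : V}
    (h : (mGraph f S).Reachable v w) (hv : v ∈ T) : w ∈ T := by
  rw [SimpleGraph.reachable_iff_reflTransGen] at h
  induction h with
  | refl => exact hv
  | tail _ hadj ih =>
    rw [mGraph, SimpleGraph.fromRel_adj] at hadj
    obtain ⟨-, ⟨i, hi, hfi⟩ | ⟨i, hi, hfi⟩⟩ := hadj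
    · exact hT i hi _ _ hfi ih
    · exact hT i hi _ _ (hfi.trans Sym2.eq_swap) ih

lemma DecodEven.exists_loop_mem {f : ι → Sym2 V} {S : Set ι} (hd : DecodEven f S) {T : Set V}
    (hT : ∀ i ∈ S, ∀ a b, f i = s(a, b) → a ∈ T → b ∈ T) {v : V} (hv : v ∈ T) :
    ∃ i ∈ S, ∃ w ∈ T, f i = s(w, w) := by
  obtain ⟨w, hvw, i, hi, hfi⟩ := hd v
  exact ⟨i, hi, w, mGraph_reachable_mem hT hvw hv, hfi⟩

variable [Fintype ι] [DecidableEq V]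

def incSet (f : ι → Sym2 V) (v : V) : Finset ι := {i | v ∈ f i}

def loopSet (f : ι → Sym2 V) : Finset ι := {i | (f i).IsDiag}

variable {f : ι → Sym2 V}

@[simp] lemma mem_incSet {v : V} {i : ι} : i ∈ incSet f v ↔ v ∈ f i := by simp [incSet]

@[simp] lemma mem_loopSet {i : ι} : i ∈ loopSet f ↔ (f i).IsDiag := by simp [loopSet]

lemma card_incSet (v : V) : #(incSet f v) = incDeg f v := by
  rw [incDeg, Nat.card_eq_fintype_card, Fintype.card_subtype, incSet]

lemma card_loopSet : #(loopSet f) = Nat.card {i // (f i).IsDiag} := by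
  rw [Nat.card_eq_fintype_card, Fintype.card_subtype, loopSet]

lemma not_decodEven_compl_incSet (v : V) : ¬ DecodEven f (↑(incSet f v))ᶜ := by
  intro hd
  have hT : ∀ i ∈ (↑(incSet f v) : Set ι)ᶜ, ∀ a b, f i = s(a, b) → a ∈ ({v} : Set V) →
      b ∈ ({v} : Set V) := by
    rintro i hi a b hfi rfl
    simp [hfi] at hi
  obtain ⟨i, hi, w, rfl, hfi⟩ := hd.exists_loop_mem hT rfl
  simp [hfi] at hi

lemma not_decodEven_compl_loopSet [Nonempty V] : ¬ DecodEven f (↑(loopSet f))ᶜ := by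
  intro hd
  obtain ⟨_, -, i, hi, hfi⟩ := hd (Classical.arbitrary V)
  simp [hfi] at hi

-- All edges at `v` or `w` would join `v` and `w`, making `{v, w}` a loop-free union of components.
lemma incSet_injective (hdec : DecodEven f Set.univ) : Function.Injective (incSet f) := by
  intro v w hvw
  by_contra hne
  have hv_mem : ∀ i, ∀ a ∈ ({v, w} : Set V), a ∈ f i → v ∈ f i := by
    rintro i a (rfl | rfl) ha
    · exact ha
    · rwa [← mem_incSet, hvw, mem_incSet]
  have hedge : ∀ i, v ∈ f i → f i = s(v, w) := fun i hv =>
    Sym2.eq_of_ne_mem hne hv (by rwa [← mem_incSet, ← hvw, mem_incSet])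
      (Sym2.mem_mk_left v w) (Sym2.mem_mk_right v w)
  have hT : ∀ i ∈ Set.univ, ∀ a b, f i = s(a, b) → a ∈ ({v, w} : Set V) →
      b ∈ ({v, w} : Set V) := by
    rintro i - a b hfi ha
    have hb : b ∈ f i := hfi ▸ Sym2.mem_mk_right a b
    rw [hedge i (hv_mem i a ha (hfi ▸ Sym2.mem_mk_left a b)), Sym2.mem_iff] at hb
    exact hb
  obtain ⟨i, -, x, hx, hfi⟩ := hdec.exists_loop_mem hT (Set.mem_insert v {w})
  have hdiag : (f i).IsDiag := hfi ▸ Sym2.mk_isDiag_iff.mpr rfl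
  rw [hedge i (hv_mem i x hx (hfi ▸ Sym2.mem_mk_left x x)), Sym2.mk_isDiag_iff] at hdiag
  exact hne hdiag

-- If all edges at `v` were loops, `{v}ᶜ` would be a union of components with no loop in it.
lemma incSet_ne_loopSet (hdec : DecodEven f Set.univ) {v w : V} (hvw : w ≠ v) :
    incSet f v ≠ loopSet f := by
  intro heq
  have hT : ∀ i ∈ Set.univ, ∀ a b, f i = s(a, b) → a ∈ ({v}ᶜ : Set V) →
      b ∈ ({v}ᶜ : Set V) := by
    rintro i - a b hfi ha rfl
    have hdiag : (f i).IsDiag := by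
      rw [← mem_loopSet, ← heq, mem_incSet, hfi]
      exact Sym2.mem_mk_right a b
    rw [hfi, Sym2.mk_isDiag_iff] at hdiag
    exact ha hdiag
  obtain ⟨i, -, x, hx, hfi⟩ := hdec.exists_loop_mem hT hvw
  have hv : v ∈ f i := by
    rw [← mem_incSet, heq, mem_loopSet, hfi]
    exact Sym2.mk_isDiag_iff.mpr rfl
  rw [hfi, Sym2.mem_iff, or_self] at hv
  exact hx hv.symm

end Multigraph

section Counting

variable {V ι : Type*} [Fintype ι] {f : ι → Sym2 V}

lemma card_le_uCount {x : ℕ} {s : Finset (Finset ι)}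
    (hs : ∀ D ∈ s, #D = x ∧ ¬ DecodEven f (↑D)ᶜ) : #s ≤ uCount f x := by
  rw [uCount, ← Nat.card_eq_finsetCard]
  exact Nat.card_le_card_of_injective (fun D : s => ⟨D.1, hs D.1 D.2⟩)
    fun _ _ h => Subtype.ext (congrArg Subtype.val h :)

lemma uCount_le_choose (x : ℕ) : uCount f x ≤ (Fintype.card ι).choose x := by
  rw [uCount, ← Fintype.card_finset_len, ← Nat.card_eq_fintype_card]
  exact Nat.card_le_card_of_injective (fun D => ⟨D.1, D.2.1⟩)
    fun _ _ h => Subtype.ext (congrArg Subtype.val h :)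

lemma uCount_eq_zero [IsEmpty V] (x : ℕ) : uCount f x = 0 :=
  Nat.card_eq_zero.mpr (.inl ⟨fun D => D.2.2 fun v => isEmptyElim v⟩)

lemma bCut_le {x : ℕ} (h : 0 < uCount f x) : bCut f ≤ x :=
  Nat.sInf_le h

lemma uCount_bCut_pos {x : ℕ} (h : 0 < uCount f x) : 0 < uCount f (bCut f) :=
  Nat.sInf_mem (s := {x | 0 < uCount f x}) ⟨x, h⟩

lemma uCount_incDeg_pos (v : V) : 0 < uCount f (incDeg f v) := by
  classical
  exact card_pos.mpr ⟨_, mem_singleton_self (incSet f v)⟩ |>.trans_le <| card_le_uCount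
    fun D hD => mem_singleton.mp hD ▸ ⟨card_incSet v, not_decodEven_compl_incSet v⟩

lemma uCount_card_loops_pos [Nonempty V] : 0 < uCount f (Nat.card {i // (f i).IsDiag}) := by
  classical
  exact card_pos.mpr ⟨_, mem_singleton_self (loopSet f)⟩ |>.trans_le <| card_le_uCount
    fun D hD => mem_singleton.mp hD ▸ ⟨card_loopSet, not_decodEven_compl_loopSet⟩

lemma card_incDeg_eq_le_uCount [Fintype V] (hdec : DecodEven f Set.univ) (x : ℕ) :
    Nat.card {v // incDeg f v = x} ≤ uCount f x := by
  classical
  rw [Nat.card_eq_fintype_card, Fintype.card_subtype,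
    ← card_image_of_injective _ (incSet_injective hdec)]
  refine card_le_uCount fun D hD => ?_
  obtain ⟨v, hv, rfl⟩ := mem_image.mp hD
  exact ⟨(card_incSet v).trans (mem_filter.mp hv).2, not_decodEven_compl_incSet v⟩

lemma card_incDeg_eq_add_one_le_uCount [Fintype V] (hdec : DecodEven f Set.univ)
    (hV : 1 < Fintype.card V) {x : ℕ} (hL : Nat.card {i // (f i).IsDiag} = x) :
    Nat.card {v // incDeg f v = x} + 1 ≤ uCount f x := by
  classical
  have : Nonempty V := Fintype.card_pos_iff.mp (by omega)
  have hloop : loopSet f ∉ image (incSet f) {v | incDeg f v = x} := by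
    simp only [mem_image, not_exists, not_and]
    intro v _ heq
    obtain ⟨w, hw⟩ := Fintype.exists_ne_of_one_lt_card hV v
    exact incSet_ne_loopSet hdec hw heq
  rw [Nat.card_eq_fintype_card, Fintype.card_subtype,
    ← card_image_of_injective _ (incSet_injective hdec), ← card_insert_of_notMem hloop]
  refine card_le_uCount fun D hD => ?_
  obtain rfl | hD := mem_insert.mp hD
  · exact ⟨card_loopSet.trans hL, not_decodEven_compl_loopSet⟩
  obtain ⟨v, hv, rfl⟩ := mem_image.mp hD
  exact ⟨(card_incSet v).trans (mem_filter.mp hv).2, not_decodEven_compl_incSet v⟩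

end Counting

lemma sum_incDeg_add_card_loops {V ι : Type*} [Fintype V] [Fintype ι] (f : ι → Sym2 V) :
    ∑ v, incDeg f v + Nat.card {i // (f i).IsDiag} = 2 * Fintype.card ι := by
  classical
  calc ∑ v, incDeg f v + Nat.card {i // (f i).IsDiag}
      = ∑ i, #(f i).toFinset + ∑ i, if (f i).IsDiag then 1 else 0 := by
        rw [← card_loopSet, loopSet, card_filter]
        congr 1
        simp_rw [← card_incSet]
        convert sum_card_bipartiteAbove_eq_sum_card_bipartiteBelow (fun v i => v ∈ f i) using 3
        · rfl
        · ext v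
          simp [bipartiteBelow]
    _ = ∑ _i : ι, 2 := by
        rw [← sum_add_distrib]
        exact sum_congr rfl fun i _ => by rw [Sym2.card_toFinset]; split_ifs <;> rfl
    _ = 2 * Fintype.card ι := by rw [sum_const, card_univ, smul_eq_mul, mul_comm]

lemma succ_mul_card_add_card_le_sum {α : Type*} [Fintype α] {d : α → ℕ} {b : ℕ}
    (hb : ∀ a, b ≤ d a) :
    (b + 1) * Fintype.card α + Nat.card {a // b + 2 ≤ d a} ≤
      ∑ a, d a + Nat.card {a // d a = b} := by
  classical
  simp only [Nat.card_eq_fintype_card, Fintype.card_subtype, card_filter]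
  calc (b + 1) * Fintype.card α + ∑ a, (if b + 2 ≤ d a then 1 else 0)
      = ∑ a, (b + 1 + if b + 2 ≤ d a then 1 else 0) := by
        rw [sum_add_distrib, sum_const, card_univ, smul_eq_mul, mul_comm]
    _ ≤ ∑ a, (d a + if d a = b then 1 else 0) :=
        sum_le_sum fun a _ => by have := hb a; split_ifs <;> omega
    _ = ∑ a, d a + ∑ a, (if d a = b then 1 else 0) := sum_add_distrib

/-- Let `f` be a decodable (`q` even sense) multigraph with `m` edges on
`n` vertices satisfying `u_b = b(n+1) + n − 2m + 1`. With `α` the number of vertices of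
incidence degree `b`, `β` the number of vertices of incidence degree at least `b + 2`, and
`L` the number of loops, one has `β = 0` and either `α = b(n+1) + n − 2m` with `L = b`, or
`α = b(n+1) + n − 2m + 1` with `L = b + 1`. -/
theorem uCount_bCut_eq_lower_bound_structure {V : Type*} [Fintype V] {m n : ℕ}
    (f : Fin m → Sym2 V) (hn : Fintype.card V = n) (hdec : DecodEven f Set.univ)
    (b α β L : ℕ) (hb : b = bCut f)
    (hu : (uCount f b : ℤ) = b * (n + 1) + n - 2 * m + 1)
    (hα : Nat.card {v : V // incDeg f v = b} = α)
    (hβ : Nat.card {v : V // b + 2 ≤ incDeg f v} = β)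
    (hL : Nat.card {i : Fin m // (f i).IsDiag} = L) :
    β = 0 ∧
      (((α : ℤ) = b * (n + 1) + n - 2 * m ∧ L = b) ∨
        ((α : ℤ) = b * (n + 1) + n - 2 * m + 1 ∧ L = b + 1)) := by
  obtain rfl | hn0 := eq_or_ne n 0
  · have : IsEmpty V := Fintype.card_eq_zero_iff.mp hn
    have : IsEmpty (Fin m) := f.isEmpty
    have hm : m = 0 := (Fintype.card_fin m).symm.trans Fintype.card_eq_zero
    rw [uCount_eq_zero] at hu
    omega
  have : Nonempty V := Fintype.card_pos_iff.mp (by omega)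
  have hbL : b ≤ L := hb ▸ hL ▸ bCut_le uCount_card_loops_pos
  have hLm : L ≤ m := hL ▸ (Finite.card_subtype_le _).trans_eq (Nat.card_fin m)
  have hpos : 0 < uCount f b := hb ▸ uCount_bCut_pos uCount_card_loops_pos
  obtain rfl | hn2 : n = 1 ∨ 1 < n := by omega
  · have hchoose := uCount_le_choose (f := f) b
    rw [Fintype.card_fin] at hchoose
    have hbm : b = m := by omega
    subst hbm
    rw [Nat.choose_self] at hchoose
    omega
  have hαu := hα ▸ card_incDeg_eq_le_uCount hdec b
  have hαu' : L = b → α + 1 ≤ uCount f b := fun h =>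
    hα ▸ card_incDeg_eq_add_one_le_uCount hdec (hn ▸ hn2) (hL.trans h)
  have hdeg := hα ▸ hβ ▸ succ_mul_card_add_card_le_sum (d := incDeg f) (b := b)
    fun v => hb ▸ bCut_le (uCount_incDeg_pos v)
  have hsum := hL ▸ sum_incDeg_add_card_loops f
  rw [hn, add_one_mul] at hdeg
  rw [Fintype.card_fin] at hsum
  rw [show (b : ℤ) * (n + 1) = b * n + b by ring] at hu ⊢
  omega
end

section
/- Let f : Fin m → Sym2 V be a multigraph on a finite vertex set V with |V| = n that is decodable (q even sense) and satisfies u_b = b(n+1) + n − 2m + 1. Let θ = b(n+1) + n − 2m, let Ω be the maximum, over pairs of distinct vertices u, v, of the number of indices i with f i = s(u,v), and let Δ_L be the maximum, over vertices v, of the number of indices i with f i = s(v,v). Then for every y with 1 ≤ y ≤ b − max(Ω, Δ_L) − 1, u_{b+y} ≥ (θ + 1)·C(m−b, y) + (n − θ)·C(m−b−1, y−1). -/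
/-!
Read a loop at `w` as an edge from `w` to an extra vertex `none`, so that every edge index has
exactly two ends in `Option V`. Deleting the star of edges at any of these `n + 1` vertices
leaves an undecodable multigraph, so every star has at least `b` edges, and the star sizes add
up to `2m`. Two distinct stars share at most `max Ω Δ_L < b - y` edges, so distinct stars of
size `b` are distinct undecodable `b`-sets and no `(b + y)`-set contains two stars. At most
`u_b` stars thus have size `b`, and with the star sizes summing to `2m` the hypothesis on `u_b`
leaves room only for exactly `θ + 1` stars of size `b` and `n - θ` of size `b + 1`. Counting
the `(b + y)`-supersets of all stars gives the bound.
-/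

open Finset

theorem SimpleGraph.IsIsolated.eq_of_reachable {V : Type*} {G : SimpleGraph V} {v w : V}
    (hv : G.IsIsolated v) (h : G.Reachable v w) : w = v := by
  obtain ⟨p⟩ := h
  cases p with
  | nil => rfl
  | cons hadj _ => exact (hv _ hadj).elim

theorem card_filter_eq_and_eq_add_one_of_add_sum_le {κ : Type*} [Fintype κ] (a : κ → ℕ)
    {b u : ℕ} (hb : ∀ K, b ≤ a K) (hu : #{K | a K = b} ≤ u)
    (hsum : u + ∑ K, a K ≤ (b + 1) * Fintype.card κ) :
    #{K | a K = b} = u ∧ ∀ K, a K ≠ b → a K = b + 1 := by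
  -- `e` bounds `a` pointwise from below and sums to `(b + 1) * card κ - #{K | a K = b}`, so `hsum`
  -- forces `a = e`.
  set e : κ → ℕ := fun K => if a K = b then b else b + 1
  have hea : ∀ K ∈ univ, e K ≤ a K := fun K _ => by
    have := hb K
    simp only [e]
    split_ifs <;> omega
  have hsum_e : ∑ K, e K + #{K | a K = b} = (b + 1) * Fintype.card κ := by
    simp only [e, sum_ite, sum_const, smul_eq_mul]
    have := card_filter_add_card_filter_not (s := univ) (fun K => a K = b)
    rw [← card_univ, ← this]
    ring
  have hle := sum_le_sum hea
  have hA : #{K | a K = b} = u := by omega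
  refine ⟨hA, fun K hK => ?_⟩
  have heq := (sum_eq_sum_iff_of_le hea).1 (by omega) K (mem_univ K)
  simp only [e, if_neg hK] at heq
  omega

theorem sum_eq_card_filter_eq_mul_add {κ : Type*} [Fintype κ] (a : κ → ℕ) (g : ℕ → ℕ) {b : ℕ}
    (h : ∀ K, a K ≠ b → a K = b + 1) :
    ∑ K, g (a K) = #{K | a K = b} * g b + #{K | a K ≠ b} * g (b + 1) := by
  rw [← sum_filter_add_sum_filter_not univ (fun K => a K = b), card_eq_sum_ones,
    card_eq_sum_ones, sum_mul, sum_mul]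
  congr 1 <;> refine sum_congr rfl fun K hK => ?_ <;> rw [mem_filter] at hK
  · rw [hK.2, one_mul]
  · rw [h K hK.2, one_mul]

theorem add_lt_card_union_of_card_inter_add_lt {α : Type*} [DecidableEq α] {A B : Finset α}
    {b y : ℕ} (hA : b ≤ #A) (hB : b ≤ #B) (h : #(A ∩ B) + y < b) : b + y < #(A ∪ B) := by
  have := card_union_add_card_inter A B
  omega

theorem card_filter_powersetCard_univ_superset {α : Type*} [Fintype α] [DecidableEq α]
    {C : Finset α} {t : ℕ} (h : #C ≤ t) :
    #{D ∈ (univ : Finset α).powersetCard t | C ⊆ D} = (Fintype.card α - #C).choose (t - #C) := by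
  simpa using card_filter_powersetCard_subset C univ t (subset_univ _) h

section Decodability

variable {V ι : Type*}

theorem mGraph_adj {f : ι → Sym2 V} {S : Set ι} {a b : V} :
    (mGraph f S).Adj a b ↔ a ≠ b ∧ ∃ i ∈ S, f i = s(a, b) := by
  simp [mGraph, Sym2.eq_swap]

theorem DecodEven.mono {f : ι → Sym2 V} {S T : Set ι} (hST : S ⊆ T) (h : DecodEven f S) :
    DecodEven f T := by
  intro v
  obtain ⟨w, hvw, i, hi, hfi⟩ := h v
  refine ⟨w, hvw.mono fun a b hab => ?_, i, hST hi, hfi⟩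
  obtain ⟨hne, j, hj, hfj⟩ := mGraph_adj.1 hab
  exact mGraph_adj.2 ⟨hne, j, hST hj, hfj⟩

variable [Fintype ι] {f : ι → Sym2 V}

open Classical in
theorem uCount_eq_card_filter (f : ι → Sym2 V) (x : ℕ) :
    uCount f x =
      #{D ∈ (univ : Finset ι).powersetCard x | ¬ DecodEven f (((D : Finset ι) : Set ι)ᶜ)} := by
  rw [uCount, Nat.card_eq_fintype_card, Fintype.card_subtype]
  simp only [powersetCard_eq_filter, powerset_univ, filter_filter]

theorem bCut_le_card {D : Finset ι} (hD : ¬ DecodEven f ((↑D : Set ι)ᶜ)) : bCut f ≤ #D :=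
  Nat.sInf_le (Nat.card_pos_iff.2 ⟨⟨⟨D, rfl, hD⟩⟩, inferInstance⟩)

theorem nonempty_of_bCut_pos (h : 0 < bCut f) : Nonempty V := by
  by_contra hV
  rw [not_nonempty_iff] at hV
  have hu : ∀ x, uCount f x = 0 := fun x => by simp [uCount, DecodEven]
  simp [bCut, hu] at h

theorem sum_card_supersets_le_uCount [DecidableEq ι] {κ : Type*} {t : ℕ} (s : Finset κ)
    (S : κ → Finset ι) (hS : ∀ K ∈ s, ¬ DecodEven f ((↑(S K) : Set ι)ᶜ))
    (hunion : ∀ K ∈ s, ∀ K' ∈ s, K ≠ K' → t < #(S K ∪ S K')) :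
    ∑ K ∈ s, #{D ∈ (univ : Finset ι).powersetCard t | S K ⊆ D} ≤ uCount f t := by
  classical
  have hdisj : (s : Set κ).PairwiseDisjoint
      fun K => {D ∈ (univ : Finset ι).powersetCard t | S K ⊆ D} := by
    intro K hK K' hK' hne
    rw [Function.onFun, disjoint_left]
    intro D hD hD'
    rw [mem_filter, mem_powersetCard] at hD hD'
    have := card_le_card (union_subset hD.2 hD'.2)
    have := hunion K hK K' hK' hne
    omega
  rw [uCount_eq_card_filter, ← card_biUnion hdisj]
  refine card_le_card (biUnion_subset.2 fun K hK D hD => ?_)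
  rw [mem_filter] at hD ⊢
  exact ⟨hD.1, fun h => hS K hK (h.mono (Set.compl_subset_compl.2 (coe_subset.2 hD.2)))⟩

end Decodability

section ExtendedStars

variable {V ι : Type*} [Fintype ι] (f : ι → Sym2 V)

open Classical in
noncomputable def extStar : Option V → Finset ι
  | some v => {i | v ∈ f i}
  | none => {i | (f i).IsDiag}

variable {f}

@[simp]
theorem mem_extStar_some {v : V} {i : ι} : i ∈ extStar f (some v) ↔ v ∈ f i := by
  simp [extStar]

@[simp]
theorem mem_extStar_none {i : ι} : i ∈ extStar f none ↔ (f i).IsDiag := by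
  simp [extStar]

theorem card_filter_mem_extStar [Fintype V] [DecidableEq ι] (i : ι) :
    #{K | i ∈ extStar f K} = 2 := by
  classical
  obtain ⟨⟨a, b⟩, hab⟩ := Sym2.mk_surjective (f i)
  by_cases h : a = b
  · subst h
    rw [show ({K | i ∈ extStar f K} : Finset (Option V)) = {some a, none} by
      ext (_ | v) <;> simp [← hab, eq_comm]]
    exact card_pair (Option.some_ne_none a)
  · rw [show ({K | i ∈ extStar f K} : Finset (Option V)) = {some a, some b} by
      ext (_ | v) <;> simp [← hab, h]]
    exact card_pair (by simpa using h)

variable (f) in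
theorem sum_card_extStar [Fintype V] : ∑ K, #(extStar f K) = 2 * Fintype.card ι := by
  classical
  have := sum_card_bipartiteAbove_eq_sum_card_bipartiteBelow
    (s := (univ : Finset (Option V))) (t := (univ : Finset ι)) (r := fun K i => i ∈ extStar f K)
  simp only [bipartiteAbove, bipartiteBelow, filter_mem_eq_inter, univ_inter] at this
  simp [this, card_filter_mem_extStar, mul_comm]

theorem not_decodEven_compl_extStar [Nonempty V] (K : Option V) :
    ¬ DecodEven f ((↑(extStar f K) : Set ι)ᶜ) := by
  intro h
  cases K with
  | none =>
    obtain ⟨w, -, i, hi, hfi⟩ := h (Classical.arbitrary V)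
    exact hi (by simp [hfi])
  | some v =>
    obtain ⟨w, hvw, i, hi, hfi⟩ := h v
    have hv : (mGraph f ((↑(extStar f (some v)) : Set ι)ᶜ)).IsIsolated v := fun x hx => by
      obtain ⟨-, j, hj, hfj⟩ := mGraph_adj.1 hx
      exact hj (by simp [hfj])
    obtain rfl := hv.eq_of_reachable hvw
    exact hi (by simp [hfi])

theorem bCut_le_card_extStar [Nonempty V] (K : Option V) : bCut f ≤ #(extStar f K) :=
  bCut_le_card (not_decodEven_compl_extStar K)

theorem card_extStar_some_inter_some [DecidableEq ι] {u v : V} (huv : u ≠ v) :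
    #(extStar f (some u) ∩ extStar f (some v)) = Nat.card {i // f i = s(u, v)} := by
  classical
  rw [Nat.card_eq_fintype_card, Fintype.card_subtype]
  congr 1
  ext i
  simp [Sym2.mem_and_mem_iff huv]

theorem card_extStar_some_inter_none [DecidableEq ι] (v : V) :
    #(extStar f (some v) ∩ extStar f none) = Nat.card {i // f i = s(v, v)} := by
  classical
  rw [Nat.card_eq_fintype_card, Fintype.card_subtype]
  congr 1
  ext i
  obtain ⟨⟨a, b⟩, hab⟩ := Sym2.mk_surjective (f i)
  simp [← hab]
  grind

theorem card_inter_extStar_le [DecidableEq ι] {M : ℕ}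
    (hmult : ∀ u v, u ≠ v → Nat.card {i // f i = s(u, v)} ≤ M)
    (hloop : ∀ v, Nat.card {i // f i = s(v, v)} ≤ M) :
    ∀ {K K' : Option V}, K ≠ K' → #(extStar f K ∩ extStar f K') ≤ M
  | some u, some v, h => by
    have huv : u ≠ v := mt (congrArg some) h
    exact (card_extStar_some_inter_some huv).trans_le (hmult u v huv)
  | some v, none, _ => (card_extStar_some_inter_none v).trans_le (hloop v)
  | none, some v, _ =>
    inter_comm (extStar f _) _ ▸ (card_extStar_some_inter_none v).trans_le (hloop v)
  | none, none, h => absurd rfl h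

end ExtendedStars

section Counting

variable {V ι : Type*} [Fintype V] [Nonempty V] [Fintype ι] [DecidableEq ι] {f : ι → Sym2 V}

theorem card_filter_card_extStar_eq_bCut_le_uCount
    (hinter : ∀ K K' : Option V, K ≠ K' → #(extStar f K ∩ extStar f K') < bCut f) :
    #{K | #(extStar f K) = bCut f} ≤ uCount f (bCut f) :=
  calc #{K | #(extStar f K) = bCut f}
      = ∑ K with #(extStar f K) = bCut f,
          #{D ∈ (univ : Finset ι).powersetCard (bCut f) | extStar f K ⊆ D} := by
        rw [card_eq_sum_ones]
        refine sum_congr rfl fun K hK => ?_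
        rw [card_filter_powersetCard_univ_superset (mem_filter.1 hK).2.le, (mem_filter.1 hK).2]
        simp
    _ ≤ uCount f (bCut f) := by
        refine sum_card_supersets_le_uCount _ _ (fun K _ => not_decodEven_compl_extStar K)
          fun K _ K' _ hKK' => ?_
        simpa using add_lt_card_union_of_card_inter_add_lt (y := 0)
          (bCut_le_card_extStar K) (bCut_le_card_extStar K')
          (by simpa using hinter K K' hKK')

theorem uCount_bCut_mul_choose_add_le_uCount {y : ℕ} (hy : 1 ≤ y)
    (hinter : ∀ K K' : Option V, K ≠ K' → #(extStar f K ∩ extStar f K') + y < bCut f)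
    (hu : uCount f (bCut f) + 2 * Fintype.card ι = (bCut f + 1) * (Fintype.card V + 1)) :
    (uCount f (bCut f) : ℤ) * (Fintype.card ι - bCut f).choose y
      + ((Fintype.card V : ℤ) + 1 - uCount f (bCut f))
        * (Fintype.card ι - bCut f - 1).choose (y - 1) ≤ uCount f (bCut f + y) := by
  obtain ⟨hcard_eq, hsucc⟩ := card_filter_eq_and_eq_add_one_of_add_sum_le (fun K => #(extStar f K))
    bCut_le_card_extStar
    (card_filter_card_extStar_eq_bCut_le_uCount fun K K' h => by have := hinter K K' h; omega)
    (by rw [sum_card_extStar, Fintype.card_option]; omega)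
  set b := bCut f
  have hcard_ne : (#{K | #(extStar f K) ≠ b} : ℤ) = Fintype.card V + 1 - uCount f b := by
    have := card_filter_add_card_filter_not (s := univ) (fun K => #(extStar f K) = b)
    simp only [card_univ, Fintype.card_option, ← ne_eq] at this
    omega
  have hsmall : ∀ K, #(extStar f K) ≤ b + y := fun K => by
    by_cases h : #(extStar f K) = b
    · omega
    · have := hsucc K h; omega
  calc _ = ((∑ K, (Fintype.card ι - #(extStar f K)).choose (b + y - #(extStar f K)) : ℕ) : ℤ) := by
        rw [sum_eq_card_filter_eq_mul_add _ (fun c => (Fintype.card ι - c).choose (b + y - c)) hsucc]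
        push_cast
        rw [hcard_eq, hcard_ne, Nat.add_sub_cancel_left, Nat.sub_add_eq,
          show b + y - (b + 1) = y - 1 by omega]
    _ = ((∑ K, #{D ∈ (univ : Finset ι).powersetCard (b + y) | extStar f K ⊆ D} : ℕ) : ℤ) := by
        rw [sum_congr rfl fun K _ => card_filter_powersetCard_univ_superset (hsmall K)]
    _ ≤ uCount f (b + y) := by
        exact_mod_cast sum_card_supersets_le_uCount _ _
          (fun K _ => not_decodEven_compl_extStar K) fun K _ K' _ hKK' =>
            add_lt_card_union_of_card_inter_add_lt (bCut_le_card_extStar K)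
              (bCut_le_card_extStar K') (hinter K K' hKK')

end Counting

theorem uCount_bCut_add_lower_bound_general {V : Type*} [Fintype V] {m n : ℕ}
    (f : Fin m → Sym2 V) (hn : Fintype.card V = n)
    (b : ℕ) (hb : b = bCut f) (θ : ℤ) (hθ : θ = b * (n + 1) + n - 2 * m)
    (hu : (uCount f b : ℤ) = θ + 1)
    (Ω ΔL : ℕ)
    (hΩ : Ω = sSup {c : ℕ | ∃ u v : V, u ≠ v ∧ c = Nat.card {i : Fin m // f i = s(u, v)}})
    (hΔL : ΔL = sSup {c : ℕ | ∃ v : V, c = Nat.card {i : Fin m // f i = s(v, v)}})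
    (y : ℕ) (hy1 : 1 ≤ y) (hy2 : (y : ℤ) ≤ (b : ℤ) - max Ω ΔL - 1) :
    (θ + 1) * Nat.choose (m - b) y + ((n : ℤ) - θ) * Nat.choose (m - b - 1) (y - 1) ≤
      (uCount f (b + y) : ℤ) := by
  subst hb hn
  have : Nonempty V := nonempty_of_bCut_pos (f := f) (by omega)
  have hmult : ∀ u v : V, u ≠ v → Nat.card {i // f i = s(u, v)} ≤ max Ω ΔL := fun u v huv =>
    le_max_of_le_left <| hΩ ▸ le_csSup ⟨m, by
      rintro _ ⟨u, v, -, rfl⟩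
      exact (Finite.card_subtype_le _).trans (Nat.card_fin m).le⟩ ⟨u, v, huv, rfl⟩
  have hloop : ∀ v : V, Nat.card {i // f i = s(v, v)} ≤ max Ω ΔL := fun v =>
    le_max_of_le_right <| hΔL ▸ le_csSup ⟨m, by
      rintro _ ⟨v, rfl⟩
      exact (Finite.card_subtype_le _).trans (Nat.card_fin m).le⟩ ⟨v, rfl⟩
  have key := uCount_bCut_mul_choose_add_le_uCount (f := f) hy1
    (fun K K' h => by have := card_inter_extStar_le hmult hloop h; omega)
    (by rw [Fintype.card_fin]; zify; linarith)
  rw [Fintype.card_fin] at key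
  rwa [← hu, show (Fintype.card V : ℤ) - θ = Fintype.card V + 1 - uCount f (bCut f) by omega]

/-- Let `f` be a decodable (`q` even sense) multigraph with `m` edges on
`n` vertices satisfying `u_b = b(n+1) + n − 2m + 1`, and set `θ = b(n+1) + n − 2m`. With
`Ω` the maximum edge multiplicity between distinct vertices and `Δ_L` the maximum number
of loops at a single vertex, for every `y` with `1 ≤ y ≤ b − max(Ω, Δ_L) − 1` one has
`u_{b+y} ≥ (θ + 1)·C(m−b, y) + (n − θ)·C(m−b−1, y−1)`. -/
theorem uCount_bCut_add_lower_bound {V : Type*} [Fintype V] {m n : ℕ}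
    (f : Fin m → Sym2 V) (hn : Fintype.card V = n) (hdec : DecodEven f Set.univ)
    (b : ℕ) (hb : b = bCut f) (θ : ℤ) (hθ : θ = b * (n + 1) + n - 2 * m)
    (hu : (uCount f b : ℤ) = θ + 1)
    (Ω ΔL : ℕ)
    (hΩ : Ω = sSup {c : ℕ | ∃ u v : V, u ≠ v ∧ c = Nat.card {i : Fin m // f i = s(u, v)}})
    (hΔL : ΔL = sSup {c : ℕ | ∃ v : V, c = Nat.card {i : Fin m // f i = s(v, v)}})
    (y : ℕ) (hy1 : 1 ≤ y) (hy2 : (y : ℤ) ≤ (b : ℤ) - max Ω ΔL - 1) :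
    (θ + 1) * Nat.choose (m - b) y + ((n : ℤ) - θ) * Nat.choose (m - b - 1) (y - 1) ≤
      (uCount f (b + y) : ℤ) :=
  uCount_bCut_add_lower_bound_general f hn b hb θ hθ hu Ω ΔL hΩ hΔL y hy1 hy2
end
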